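/- arXiv:1112.6359 — 2 statements merged into one kernel-verified Lean document; each statement's English description precedes it below -/
import Mathlib

section
/- Suppose reals k, l, χ, t, K with k > 8 and a finite family (r_i) with 2 ≤ r_i ≤ k/2 - 2 satisfy Σ(r_i - 2)(k - r_i - 2) = 2k² - k(4χ + t - K + 8) + 16χ + 2t - 2K and 2l = -2k + 4χ + t - K + 8 + Σ(r_i - 2), and that l ≥ k/2 + r_m - 2 where r_m := max r_i (or r_m = 0 for the empty family). If k > 5 + √(1 + 8χ), then (4χ + t - K)·k ≤ 32χ + 4t - 4K. -/
open Finset in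
theorem prop7e (k l χ t K rm : ℝ) (n : ℕ) (r : Fin n → ℝ)
    (hk : k > 8)
    (hr : ∀ i, 2 ≤ r i ∧ r i ≤ k / 2 - 2)
    (hH : ∑ i, (r i - 2) * (k - r i - 2)
      = 2 * k ^ 2 - k * (4 * χ + t - K + 8) + 16 * χ + 2 * t - 2 * K)
    (hG : 2 * l = -2 * k + 4 * χ + t - K + 8 + ∑ i, (r i - 2))
    (hmax : ∀ i, r i ≤ rm)
    (hattain : (∃ i, r i = rm) ∨ rm = 0)
    (hrm : rm ≤ k / 2 - 2)
    (hl : l ≥ k / 2 + rm - 2)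
    (hksqrt : k > 5 + Real.sqrt (1 + 8 * χ)) :
    (4 * χ + t - K) * k ≤ 32 * χ + 4 * t - 4 * K := by
  set A := 4 * χ + t - K with hAdef
  set S1 := ∑ i, (r i - 2) with hS1def
  set H := ∑ i, (r i - 2) * (k - r i - 2) with hHdef
  have hsq : (k - 5) ^ 2 > 1 + 8 * χ := by
    rcases le_or_gt (1 + 8 * χ) 0 with h | h
    · nlinarith
    · have h1 := Real.sq_sqrt h.le
      have h2 := Real.sqrt_nonneg (1 + 8 * χ)
      nlinarith
  have hI : A + S1 ≥ 3 * k + 2 * rm - 12 := by linarith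
  have hU : (k - 2) * A < 3 * k ^ 2 - 18 * k + 24 - H := by nlinarith [hsq, hH]
  by_contra hgoal
  push_neg at hgoal
  have hneg : k * A < 4 * k ^ 2 - 16 * k - 2 * H := by nlinarith [hH, hgoal]
  rcases hattain with ⟨j, hj⟩ | hrm0
  · have hrm2 : 2 ≤ rm := hj ▸ (hr j).1
    have hP : (k - rm - 2) * S1 ≤ H := by
      rw [hS1def, hHdef, Finset.mul_sum]
      apply Finset.sum_le_sum
      intro i _
      have h1 := (hr i).1
      have h2 := hmax i
      nlinarith
    have hstar2 : H < (k - 2) * S1 - 2 * rm * (k - 2) := by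
      nlinarith [hU, mul_nonneg (show (0:ℝ) ≤ k - 2 by linarith)
        (show (0:ℝ) ≤ A + S1 - (3 * k + 2 * rm - 12) by linarith)]
    have hS1big : S1 > 2 * (k - 2) := by
      nlinarith [hP, hstar2, hrm2]
    nlinarith [hP, hneg,
      mul_nonneg (show (0:ℝ) ≤ k by linarith)
        (show (0:ℝ) ≤ A + S1 - (3 * k + 2 * rm - 12) by linarith),
      mul_nonneg (show (0:ℝ) ≤ k - 2 * rm - 4 by linarith)
        (show (0:ℝ) ≤ S1 - k by linarith)]
  · have hempty : ∀ i : Fin n, False := fun i => by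
      have h1 := (hr i).1
      have h2 := hmax i
      rw [hrm0] at h2
      linarith
    have hS10 : S1 = 0 := Finset.sum_eq_zero fun i _ => (hempty i).elim
    have hH0 : H = 0 := Finset.sum_eq_zero fun i _ => (hempty i).elim
    nlinarith [hU, hS10, hH0, hrm0,
      mul_nonneg (show (0:ℝ) ≤ k - 2 by linarith)
        (show (0:ℝ) ≤ A + S1 - (3 * k + 2 * rm - 12) by linarith)]
end

section
/- Let k, l, j, n, χ, t, K be reals with k > 8, l = k + j, j ≥ 0, and suppose Σ(r_i - 2)(k - r_i - 2) = H - n(k/2 - 2)² and 2l = G + n(k/2 - 2) + Σ(r_i - 2), where H = 2k² - k(4χ + t - K + 8) + 16χ + 2t - 2K, G = -2k + 4χ + t - K + 8, and each r_i satisfies 2 ≤ r_i ≤ k/2 - 2. Then (4χ + t - K + 8 + 2j - 2n)·k ≤ 32χ + 4t - 4K - 8n. -/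
open Finset in
theorem prop7d (k l j nn χ t K : ℝ) (m : ℕ) (r : Fin m → ℝ)
    (hk : k > 8) (hl : l = k + j) (hj : 0 ≤ j)
    (hr : ∀ i, 2 ≤ r i ∧ r i ≤ k / 2 - 2)
    (hH : ∑ i, (r i - 2) * (k - r i - 2)
      = (2 * k ^ 2 - k * (4 * χ + t - K + 8) + 16 * χ + 2 * t - 2 * K)
        - nn * (k / 2 - 2) ^ 2)
    (hG : 2 * l = (-2 * k + 4 * χ + t - K + 8) + nn * (k / 2 - 2) + ∑ i, (r i - 2)) :
    (4 * χ + t - K + 8 + 2 * j - 2 * nn) * k ≤ 32 * χ + 4 * t - 4 * K - 8 * nn := by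
  have key : ∑ i, (k / 2) * (r i - 2) ≤ ∑ i, (r i - 2) * (k - r i - 2) := by
    apply Finset.sum_le_sum
    intro i _
    obtain ⟨h1, h2⟩ := hr i
    nlinarith
  rw [← Finset.mul_sum] at key
  set S := ∑ i, (r i - 2)
  rw [hH] at key
  nlinarith [key, hG, hl, hj, hk]
end
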